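/- arXiv:2007.14684 — 5 statements merged into one kernel-verified Lean document; each statement's English description precedes it below -/
import Mathlib

section
/- For any real numbers x > 0, y > 0, r > 0 and dimension d ∈ {1,2,3}, the integral over ℝ^d of (1 + ‖λ‖)^{4r} · ( (x + ‖λ‖²)^{-r} − (y + ‖λ‖²)^{-r} )² dλ is finite. -/
/-!
By the mean value theorem, `|(x + t) ^ (-r) - (y + t) ^ (-r)|` is at most
`r |x - y| (min x y + t) ^ (-r - 1)`, and `min x y + ‖λ‖²` is comparable to `(1 + ‖λ‖)²`.
Hence the integrand is `O((1 + ‖λ‖) ^ (-4))`, which is integrable in dimension less than `4`.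
-/

open MeasureTheory Module

namespace Real

lemma abs_rpow_neg_sub_rpow_neg_le {r m a b : ℝ} (hr : 0 ≤ r) (hm : 0 < m) (ha : m ≤ a)
    (hb : m ≤ b) : |a ^ (-r) - b ^ (-r)| ≤ r * m ^ (-r - 1) * |a - b| := by
  have hderiv : ∀ u ∈ Set.Ici m,
      HasDerivWithinAt (fun u : ℝ ↦ u ^ (-r)) (-r * u ^ (-r - 1)) (Set.Ici m) u :=
    fun u hu ↦ (hasDerivAt_rpow_const (Or.inl (hm.trans_le hu).ne')).hasDerivWithinAt
  have hbound : ∀ u ∈ Set.Ici m, ‖-r * u ^ (-r - 1)‖ ≤ r * m ^ (-r - 1) := by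
    intro u hu
    rw [norm_mul, norm_neg, norm_of_nonneg hr, norm_of_nonneg (rpow_nonneg (hm.le.trans hu) _)]
    exact mul_le_mul_of_nonneg_left (rpow_le_rpow_of_nonpos hm hu (by linarith)) hr
  simpa only [norm_eq_abs] using
    (convex_Ici m).norm_image_sub_le_of_norm_hasDerivWithin_le hderiv hbound hb ha

end Real

open Real

lemma min_one_div_two_mul_one_add_sq_le {m : ℝ} (hm : 0 ≤ m) (s : ℝ) :
    min m 1 / 2 * (1 + s) ^ 2 ≤ m + s ^ 2 := by
  have h1 : 0 ≤ min m 1 := le_min hm zero_le_one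
  nlinarith [min_le_left m 1, min_le_right m 1, sq_nonneg (s - 1)]

lemma one_add_rpow_mul_abs_rpow_neg_sub_le {x y r s : ℝ} (hx : 0 < x) (hy : 0 < y)
    (hr : 0 ≤ r) (hs : 0 ≤ s) :
    (1 + s) ^ (2 * r) * |(x + s ^ 2) ^ (-r) - (y + s ^ 2) ^ (-r)| ≤
      r * (min (min x y) 1 / 2) ^ (-r - 1) * |x - y| * (1 + s) ^ (-2 : ℝ) := by
  set c := min (min x y) 1 / 2
  have hc : 0 < c := by positivity
  have hs1 : 0 < 1 + s := by linarith
  have hbase : c * (1 + s) ^ 2 ≤ min x y + s ^ 2 :=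
    min_one_div_two_mul_one_add_sq_le (le_min hx.le hy.le) s
  have hdiff := abs_rpow_neg_sub_rpow_neg_le (a := x + s ^ 2) (b := y + s ^ 2) hr
    (by positivity : 0 < min x y + s ^ 2) (by gcongr; exact min_le_left x y)
    (by gcongr; exact min_le_right x y)
  rw [add_sub_add_right_eq_sub] at hdiff
  calc (1 + s) ^ (2 * r) * |(x + s ^ 2) ^ (-r) - (y + s ^ 2) ^ (-r)|
      ≤ (1 + s) ^ (2 * r) * (r * (c * (1 + s) ^ 2) ^ (-r - 1) * |x - y|) := by
        refine mul_le_mul_of_nonneg_left (hdiff.trans ?_) (by positivity)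
        have := rpow_le_rpow_of_nonpos (by positivity) hbase (by linarith : -r - 1 ≤ 0)
        gcongr
    _ = r * c ^ (-r - 1) * |x - y| * ((1 + s) ^ (2 * r) * (1 + s) ^ (-2 * r - 2)) := by
        rw [mul_rpow hc.le (by positivity), ← rpow_natCast, ← rpow_mul hs1.le]
        push_cast; ring_nf
    _ = r * c ^ (-r - 1) * |x - y| * (1 + s) ^ (-2 : ℝ) := by
        rw [← rpow_add hs1]; ring_nf

theorem integrable_one_add_norm_rpow_mul_sq_rpow_neg_sub {E : Type*} [NormedAddCommGroup E]
    [NormedSpace ℝ E] [FiniteDimensional ℝ E] [MeasurableSpace E] [BorelSpace E]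
    (μ : Measure E) [μ.IsAddHaarMeasure] (hE : (finrank ℝ E : ℝ) < 4) {x y r : ℝ}
    (hx : 0 < x) (hy : 0 < y) (hr : 0 ≤ r) :
    Integrable (fun v : E ↦
      (1 + ‖v‖) ^ (4 * r) * ((x + ‖v‖ ^ 2) ^ (-r) - (y + ‖v‖ ^ 2) ^ (-r)) ^ 2) μ := by
  set K := r * (min (min x y) 1 / 2) ^ (-r - 1) * |x - y|
  refine ((integrable_one_add_norm hE).const_mul (K ^ 2)).mono'
    (by fun_prop : Measurable _).aestronglyMeasurable (Filter.Eventually.of_forall fun v ↦ ?_)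
  have hs1 : 0 < 1 + ‖v‖ := by positivity
  have hsq : ∀ t : ℝ, (1 + ‖v‖) ^ (2 * t) = ((1 + ‖v‖) ^ t) ^ 2 := fun t ↦ by
    rw [← rpow_natCast, ← rpow_mul hs1.le, mul_comm]; norm_num
  calc ‖(1 + ‖v‖) ^ (4 * r) * ((x + ‖v‖ ^ 2) ^ (-r) - (y + ‖v‖ ^ 2) ^ (-r)) ^ 2‖
      = ((1 + ‖v‖) ^ (2 * r) * |(x + ‖v‖ ^ 2) ^ (-r) - (y + ‖v‖ ^ 2) ^ (-r)|) ^ 2 := by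
        rw [norm_of_nonneg (by positivity), mul_pow, sq_abs, ← hsq, ← mul_assoc]; norm_num
    _ ≤ (K * (1 + ‖v‖) ^ (-2 : ℝ)) ^ 2 := pow_le_pow_left₀ (by positivity)
        (one_add_rpow_mul_abs_rpow_neg_sub_le hx hy hr (norm_nonneg v)) 2
    _ = K ^ 2 * (1 + ‖v‖) ^ (-4 : ℝ) := by
        rw [mul_pow, ← hsq]; norm_num

/-- For x, y, r > 0 and d ∈ {1,2,3}, the integral over ℝ^d of
`(1+‖λ‖)^(4r) * ((x+‖λ‖²)^(-r) - (y+‖λ‖²)^(-r))²` is finite. -/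
theorem stmt0 (x y r : ℝ) (hx : 0 < x) (hy : 0 < y) (hr : 0 < r)
    (d : ℕ) (hd : d ∈ ({1, 2, 3} : Set ℕ)) :
    Integrable (fun lam : EuclideanSpace ℝ (Fin d) =>
      (1 + ‖lam‖) ^ (4 * r) *
        ((x + ‖lam‖ ^ 2) ^ (-r) - (y + ‖lam‖ ^ 2) ^ (-r)) ^ 2) := by
  refine integrable_one_add_norm_rpow_mul_sq_rpow_neg_sub _ ?_ hx hy hr.le
  rw [finrank_euclideanSpace_fin]
  rcases hd with rfl | rfl | rfl <;> norm_num
end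

section
/- Let T > 0 and let φ₁,…,φ_n : ℝ^d → ℂ^p each have every component a square-summable function supported in [−T,T]^d, and define h_k : ℝ^d → ℂ^p by h_k(λ) = ∫_{[−T,T]^d} e^{−i λ·t} φ_k(t) dt componentwise. Suppose c₁ ∫_{ℝ^d} h̄_k(λ)ᵀ h_ℓ(λ) dλ = δ_{kℓ} for all k, ℓ, for a constant c₁ > 0. Then for every λ ∈ ℝ^d, Σ_{k=1}^n ‖h_k(λ)‖² ≤ p (2T)^d / (c₁ (2π)^d). -/
open MeasureTheory
open scoped InnerProductSpace Real

namespace Stmt7Aux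

open scoped FourierTransform ComplexConjugate Convolution
open Complex

noncomputable section

variable {d p : ℕ}

/-- The cube `[-T,T]^d`. -/
def cube (d : ℕ) (T : ℝ) : Set (EuclideanSpace ℝ (Fin d)) := {t | ∀ i, |t i| ≤ T}

lemma cube_preimage (T : ℝ) : cube d T =
    (MeasurableEquiv.toLp 2 (Fin d → ℝ)).symm ⁻¹' (Set.univ.pi fun _ : Fin d => Set.Icc (-T) T) := by
  ext t
  simp only [cube, Set.mem_preimage, Set.mem_setOf_eq, Set.mem_univ_pi, Set.mem_Icc, abs_le,
    MeasurableEquiv.coe_toLp_symm]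

lemma measurableSet_cube (T : ℝ) : MeasurableSet (cube d T) := by
  rw [cube_preimage]
  exact (MeasurableEquiv.toLp 2 (Fin d → ℝ)).symm.measurable
    (MeasurableSet.univ_pi fun _ => measurableSet_Icc)

lemma volume_cube {T : ℝ} (hT : 0 < T) :
    volume (cube d T) = ENNReal.ofReal ((2 * T) ^ d) := by
  rw [cube_preimage]
  rw [(EuclideanSpace.volume_preserving_symm_measurableEquiv_toLp (Fin d)).measure_preimage
    ((MeasurableSet.univ_pi fun _ => measurableSet_Icc).nullMeasurableSet)]
  rw [volume_pi_pi]
  simp only [Real.volume_Icc]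
  rw [Finset.prod_const, Finset.card_univ, Fintype.card_fin]
  rw [← ENNReal.ofReal_pow (by linarith)]
  norm_num
  ring_nf

lemma volume_cube_lt_top {T : ℝ} (hT : 0 < T) : volume (cube d T) < ⊤ := by
  rw [volume_cube hT]; exact ENNReal.ofReal_lt_top


/-- The complex inner product on `ℂᵖ` as a continuous ℝ-bilinear map. -/
def innerCLM (p : ℕ) : EuclideanSpace ℂ (Fin p) →L[ℝ] EuclideanSpace ℂ (Fin p) →L[ℝ] ℂ :=
  LinearMap.mkContinuous₂
    { toFun := fun a =>
        { toFun := fun b => ⟪a, b⟫_ℂ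
          map_add' := fun b b' => inner_add_right a b b'
          map_smul' := fun r b => by
            simp only [RingHom.id_apply]
            rw [RCLike.real_smul_eq_coe_smul (K := ℂ) r b, inner_smul_real_right] }
      map_add' := fun a a' => LinearMap.ext fun b => inner_add_left a a' b
      map_smul' := fun r a => by
        ext b
        simp only [RingHom.id_apply, LinearMap.coe_mk, AddHom.coe_mk, LinearMap.smul_apply]
        rw [RCLike.real_smul_eq_coe_smul (K := ℂ) r a, inner_smul_real_left] }
    1 (fun a b => by simpa using norm_inner_le_norm (𝕜 := ℂ) a b)

@[simp] lemma innerCLM_apply (a b : EuclideanSpace ℂ (Fin p)) :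
    innerCLM p a b = ⟪a, b⟫_ℂ := rfl

lemma integrable_exp_smul {f : EuclideanSpace ℝ (Fin d) → EuclideanSpace ℂ (Fin p)}
    (hf : Integrable f) {c : EuclideanSpace ℝ (Fin d) → ℝ} (hc : Continuous c) :
    Integrable fun t => Complex.exp ((c t : ℂ) * I) • f t := by
  refine hf.norm.mono' ?_ (Filter.Eventually.of_forall fun t => ?_)
  · exact ((Complex.continuous_exp.comp
      ((Complex.continuous_ofReal.comp hc).mul continuous_const)).aestronglyMeasurable).smul
      hf.aestronglyMeasurable
  · rw [norm_smul, Complex.norm_exp_ofReal_mul_I, one_mul]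

lemma support_subset_cube {T : ℝ} {f : EuclideanSpace ℝ (Fin d) → EuclideanSpace ℂ (Fin p)}
    (hs : ∀ t : EuclideanSpace ℝ (Fin d), (∃ i : Fin d, ¬ |t i| ≤ T) → f t = 0) :
    Function.support f ⊆ cube d T := by
  intro t ht
  by_contra hmem
  exact ht (hs t (by simpa [cube, not_forall] using hmem))

lemma integrable_of_L2_cube {T : ℝ} (hT : 0 < T)
    {f : EuclideanSpace ℝ (Fin d) → EuclideanSpace ℂ (Fin p)}
    (hf2 : MemLp f 2 volume)
    (hs : ∀ t : EuclideanSpace ℝ (Fin d), (∃ i : Fin d, ¬ |t i| ≤ T) → f t = 0) :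
    Integrable f volume := by
  haveI : IsFiniteMeasure (volume.restrict (cube d T)) :=
    ⟨by rw [Measure.restrict_apply_univ]; exact volume_cube_lt_top hT⟩
  have h1 : IntegrableOn f (cube d T) volume :=
    (hf2.restrict (cube d T)).integrable one_le_two
  exact (integrableOn_iff_integrable_of_support_subset (support_subset_cube hs)).1 h1


section Parseval

variable {T : ℝ} {f g : EuclideanSpace ℝ (Fin d) → EuclideanSpace ℂ (Fin p)}

/-- `conv f g x = ∫ t, ⟪f (-t), g (x - t)⟫`. -/
def conv (f g : EuclideanSpace ℝ (Fin d) → EuclideanSpace ℂ (Fin p)) :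
    EuclideanSpace ℝ (Fin d) → ℂ :=
  (fun t => f (-t)) ⋆[innerCLM p, volume] g

lemma conv_def (x : EuclideanSpace ℝ (Fin d)) :
    conv f g x = ∫ t, ⟪f (-t), g (x - t)⟫_ℂ := by
  rw [conv, convolution_def]
  simp

lemma conv_integrable (hf1 : Integrable f) (hg1 : Integrable g) :
    Integrable (conv f g) := by
  exact (hf1.comp_neg).integrable_convolution (innerCLM p) hg1

lemma fourier_conv (hf1 : Integrable f) (hg1 : Integrable g)
    (ξ : EuclideanSpace ℝ (Fin d)) :
    𝓕 (conv f g) ξ = ⟪𝓕 f ξ, 𝓕 g ξ⟫_ℂ := by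
  have hF : Integrable (fun t => f (-t)) := hf1.comp_neg
  have hW : Integrable
      (fun q : EuclideanSpace ℝ (Fin d) × EuclideanSpace ℝ (Fin d) =>
        ⟪f (-q.2), g (q.1 - q.2)⟫_ℂ) (volume.prod volume) := by
    simpa using hF.convolution_integrand (innerCLM p) hg1
  have hcont : Continuous fun q : EuclideanSpace ℝ (Fin d) × EuclideanSpace ℝ (Fin d) =>
      Complex.exp ((↑(-2 * π * ⟪q.1, ξ⟫_ℝ) : ℂ) * Complex.I) := by
    apply Complex.continuous_exp.comp
    exact (Complex.continuous_ofReal.comp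
      ((continuous_const.mul ((continuous_fst).inner continuous_const)))).mul continuous_const
  have hP : Integrable
      (fun q : EuclideanSpace ℝ (Fin d) × EuclideanSpace ℝ (Fin d) =>
        Complex.exp ((↑(-2 * π * ⟪q.1, ξ⟫_ℝ) : ℂ) * Complex.I) * ⟪f (-q.2), g (q.1 - q.2)⟫_ℂ)
      (volume.prod volume) := by
    refine hW.bdd_mul (c := 1) hcont.aestronglyMeasurable (Filter.Eventually.of_forall fun q => ?_)
    rw [Complex.norm_exp_ofReal_mul_I]
  have hgint : Integrable fun x => Complex.exp ((↑(-2 * π * ⟪x, ξ⟫_ℝ) : ℂ) * Complex.I) • g x :=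
    integrable_exp_smul hg1 ((continuous_const.mul ((continuous_id).inner continuous_const)))
  calc 𝓕 (conv f g) ξ
      = ∫ x, Complex.exp ((↑(-2 * π * ⟪x, ξ⟫_ℝ) : ℂ) * Complex.I) • conv f g x :=
        Real.fourier_eq' (conv f g) ξ
    _ = ∫ x, ∫ t, Complex.exp ((↑(-2 * π * ⟪x, ξ⟫_ℝ) : ℂ) * Complex.I)
          * ⟪f (-t), g (x - t)⟫_ℂ ∂volume ∂volume := by
        congr 1
        ext x
        rw [conv_def, smul_eq_mul, ← integral_const_mul]
    _ = ∫ t, ∫ x, Complex.exp ((↑(-2 * π * ⟪x, ξ⟫_ℝ) : ℂ) * Complex.I)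
          * ⟪f (-t), g (x - t)⟫_ℂ ∂volume ∂volume := integral_integral_swap hP
    _ = ∫ t, Complex.exp ((↑(-2 * π * ⟪t, ξ⟫_ℝ) : ℂ) * Complex.I) * ⟪f (-t), 𝓕 g ξ⟫_ℂ := by
        congr 1
        ext t
        have hsplit : ∀ x : EuclideanSpace ℝ (Fin d),
            Complex.exp ((↑(-2 * π * ⟪x + t, ξ⟫_ℝ) : ℂ) * Complex.I)
              = Complex.exp ((↑(-2 * π * ⟪t, ξ⟫_ℝ) : ℂ) * Complex.I)
                * Complex.exp ((↑(-2 * π * ⟪x, ξ⟫_ℝ) : ℂ) * Complex.I) := by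
          intro x
          rw [← Complex.exp_add]
          congr 1
          rw [inner_add_left]
          push_cast
          ring
        have hinner : ∫ x, Complex.exp ((↑(-2 * π * ⟪x, ξ⟫_ℝ) : ℂ) * Complex.I)
              * ⟪f (-t), g x⟫_ℂ = ⟪f (-t), 𝓕 g ξ⟫_ℂ := by
          calc ∫ x, Complex.exp ((↑(-2 * π * ⟪x, ξ⟫_ℝ) : ℂ) * Complex.I) * ⟪f (-t), g x⟫_ℂ
              = ∫ x, ⟪f (-t), Complex.exp ((↑(-2 * π * ⟪x, ξ⟫_ℝ) : ℂ) * Complex.I) • g x⟫_ℂ := by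
                simp only [inner_smul_right]
            _ = ⟪f (-t), ∫ x, Complex.exp ((↑(-2 * π * ⟪x, ξ⟫_ℝ) : ℂ) * Complex.I) • g x⟫_ℂ :=
                integral_inner hgint _
            _ = ⟪f (-t), 𝓕 g ξ⟫_ℂ := by rw [← Real.fourier_eq']
        rw [← integral_add_right_eq_self (fun x =>
          Complex.exp ((↑(-2 * π * ⟪x, ξ⟫_ℝ) : ℂ) * Complex.I) * ⟪f (-t), g (x - t)⟫_ℂ) t]
        simp only [add_sub_cancel_right]
        simp only [hsplit]
        simp only [mul_assoc]
        rw [integral_const_mul]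
        have hnorm : ∀ x : EuclideanSpace ℝ (Fin d),
            -2 * (π * ⟪x, ξ⟫_ℝ) = -2 * π * ⟪x, ξ⟫_ℝ := fun x => by ring
        simp only [hnorm]
        rw [hinner]
    _ = ∫ t, ⟪Complex.exp ((↑(2 * π * ⟪t, ξ⟫_ℝ) : ℂ) * Complex.I) • f (-t), 𝓕 g ξ⟫_ℂ := by
        congr 1
        ext t
        rw [inner_smul_left]
        congr 1
        rw [← Complex.exp_conj]
        congr 1
        simp only [map_mul, Complex.conj_ofReal, Complex.conj_I]
        push_cast
        ring
    _ = ⟪∫ t, Complex.exp ((↑(2 * π * ⟪t, ξ⟫_ℝ) : ℂ) * Complex.I) • f (-t), 𝓕 g ξ⟫_ℂ := by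
        have hu : Integrable fun t =>
            Complex.exp ((↑(2 * π * ⟪t, ξ⟫_ℝ) : ℂ) * Complex.I) • f (-t) :=
          integrable_exp_smul hF ((continuous_const.mul ((continuous_id).inner continuous_const)))
        rw [← inner_conj_symm]
        rw [← integral_inner hu (𝓕 g ξ)]
        rw [← integral_conj]
        simp_rw [inner_conj_symm]
    _ = ⟪𝓕 f ξ, 𝓕 g ξ⟫_ℂ := by
        congr 1
        rw [Real.fourier_eq']
        rw [← integral_neg_eq_self (fun v =>
          Complex.exp ((↑(-2 * π * ⟪v, ξ⟫_ℝ) : ℂ) * Complex.I) • f v) volume]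
        congr 1
        ext t
        rw [inner_neg_left]
        norm_num

/-- Translation map as a continuous map. -/
def addMap (x : EuclideanSpace ℝ (Fin d)) :
    C(EuclideanSpace ℝ (Fin d), EuclideanSpace ℝ (Fin d)) :=
  ⟨fun t => x + t, by continuity⟩

lemma conv_eq_inner (hf2 : MemLp f 2 volume) (hg2 : MemLp g 2 volume)
    (x : EuclideanSpace ℝ (Fin d)) :
    conv f g x = ⟪hf2.toLp f, Lp.compMeasurePreserving (addMap x)
      (measurePreserving_add_left volume x) (hg2.toLp g)⟫_ℂ := by
  rw [MeasureTheory.L2.inner_def]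
  have h1 : (hf2.toLp f : EuclideanSpace ℝ (Fin d) → EuclideanSpace ℂ (Fin p))
      =ᵐ[volume] f := hf2.coeFn_toLp
  have h2 : (Lp.compMeasurePreserving (addMap x) (measurePreserving_add_left volume x)
        (hg2.toLp g) : EuclideanSpace ℝ (Fin d) → EuclideanSpace ℂ (Fin p))
      =ᵐ[volume] fun t => g (x + t) := by
    refine (Lp.coeFn_compMeasurePreserving _ _).trans ?_
    have := (measurePreserving_add_left volume x).quasiMeasurePreserving.ae_eq_comp
      hg2.coeFn_toLp
    exact this
  have key : conv f g x = ∫ t, ⟪f t, g (x + t)⟫_ℂ := by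
    rw [conv_def]
    have hsub : ∀ t : EuclideanSpace ℝ (Fin d), g (x - t) = g (x + -t) := fun t => by
      rw [sub_eq_add_neg]
    simp only [hsub]
    exact integral_neg_eq_self (fun t => ⟪f t, g (x + t)⟫_ℂ) volume
  rw [key]
  refine integral_congr_ae ?_
  filter_upwards [h1, h2] with t e1 e2
  rw [e1, e2]

lemma conv_continuous (hf2 : MemLp f 2 volume) (hg2 : MemLp g 2 volume) :
    Continuous (conv f g) := by
  have : conv f g = fun x => ⟪hf2.toLp f, Lp.compMeasurePreserving (addMap x)
      (measurePreserving_add_left volume x) (hg2.toLp g)⟫_ℂ :=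
    funext (conv_eq_inner hf2 hg2)
  rw [this]
  have hcmap : Continuous fun x : EuclideanSpace ℝ (Fin d) => addMap x := by
    apply ContinuousMap.continuous_of_continuous_uncurry
    exact continuous_fst.add continuous_snd
  exact Continuous.inner continuous_const
    (Continuous.compMeasurePreservingLp continuous_const hcmap _ (by norm_num))

lemma conv_zero : conv f g 0 = ∫ t, ⟪f t, g t⟫_ℂ := by
  rw [conv_def]
  have hsub : ∀ t : EuclideanSpace ℝ (Fin d), (0 : EuclideanSpace ℝ (Fin d)) - t = -t :=
    fun t => zero_sub t
  simp only [hsub]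
  exact integral_neg_eq_self (fun t => ⟪f t, g t⟫_ℂ) volume

/-- Parseval's identity for compactly supported square-integrable functions. -/
lemma parseval (hf2 : MemLp f 2 volume) (hg2 : MemLp g 2 volume)
    (hf1 : Integrable f) (hg1 : Integrable g)
    (hi : Integrable fun ξ => ⟪𝓕 f ξ, 𝓕 g ξ⟫_ℂ) :
    ∫ ξ, ⟪𝓕 f ξ, 𝓕 g ξ⟫_ℂ = ∫ t, ⟪f t, g t⟫_ℂ := by
  have h1 : Integrable (conv f g) := conv_integrable hf1 hg1
  have heq : 𝓕 (conv f g) = fun ξ => ⟪𝓕 f ξ, 𝓕 g ξ⟫_ℂ := funext (fourier_conv hf1 hg1)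
  have h2 : Integrable (𝓕 (conv f g)) := by rw [heq]; exact hi
  have hinv := h1.fourierInv_fourier_eq h2 ((conv_continuous hf2 hg2).continuousAt (x := 0))
  have h0 : 𝓕⁻ (𝓕 (conv f g)) 0 = ∫ ξ, 𝓕 (conv f g) ξ := by
    rw [Real.fourierInv_eq]
    simp
  calc ∫ ξ, ⟪𝓕 f ξ, 𝓕 g ξ⟫_ℂ = ∫ ξ, 𝓕 (conv f g) ξ := by rw [heq]
    _ = 𝓕⁻ (𝓕 (conv f g)) 0 := h0.symm
    _ = conv f g 0 := hinv
    _ = ∫ t, ⟪f t, g t⟫_ℂ := conv_zero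

end Parseval

end
end Stmt7Aux

open Stmt7Aux
open scoped FourierTransform ComplexConjugate
open Complex

/-- Bessel-type bound: if `h_k(λ) = ∫_{[−T,T]^d} e^{−iλ·t} φ_k(t) dt` with square-integrable
`φ_k` supported in `[−T,T]^d`, and `c₁ ∫ ⟨h_k(λ), h_ℓ(λ)⟩ dλ = δ_{kℓ}`, then for every λ,
`Σ_k ‖h_k(λ)‖² ≤ p (2T)^d / (c₁ (2π)^d)`. -/
theorem stmt7 {d p n : ℕ} (T c₁ : ℝ) (hT : 0 < T) (hc₁ : 0 < c₁)
    (φ : Fin n → EuclideanSpace ℝ (Fin d) → EuclideanSpace ℂ (Fin p))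
    (hφL2 : ∀ k, MemLp (φ k) 2 volume)
    (hsupp : ∀ k, ∀ t : EuclideanSpace ℝ (Fin d), (∃ i : Fin d, ¬ |t i| ≤ T) → φ k t = 0)
    (h : Fin n → EuclideanSpace ℝ (Fin d) → EuclideanSpace ℂ (Fin p))
    (hdef : ∀ k lam, h k lam =
      ∫ t : EuclideanSpace ℝ (Fin d),
        Complex.exp (-Complex.I * ((⟪lam, t⟫_ℝ : ℝ) : ℂ)) • φ k t)
    (horth : ∀ k l : Fin n,
      (c₁ : ℂ) * ∫ lam : EuclideanSpace ℝ (Fin d), ⟪h k lam, h l lam⟫_ℂ =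
        if k = l then 1 else 0) :
    ∀ lam : EuclideanSpace ℝ (Fin d),
      ∑ k : Fin n, ‖h k lam‖ ^ 2 ≤ p * (2 * T) ^ d / (c₁ * (2 * π) ^ d) := by
  intro lam
  have hπ : (0:ℝ) < 2 * π := by positivity
  have h2π : (2 * π : ℝ) ≠ 0 := ne_of_gt hπ
  -- integrability of the φ's
  have hφint : ∀ k, Integrable (φ k) volume := fun k =>
    integrable_of_L2_cube hT (hφL2 k) (hsupp k)
  -- relation between h and the Mathlib Fourier transform
  have hfh : ∀ k (ξ : EuclideanSpace ℝ (Fin d)), 𝓕 (φ k) ξ = h k ((2 * π) • ξ) := by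
    intro k ξ
    rw [hdef k ((2 * π) • ξ), Real.fourier_eq']
    congr 1
    funext t
    congr 1
    rw [real_inner_smul_left, real_inner_comm]
    push_cast
    ring
  -- continuity of h k
  have hcont : ∀ k, Continuous (h k) := by
    intro k
    have h1 : Continuous (𝓕 (φ k)) :=
      VectorFourier.fourierIntegral_continuous Real.continuous_fourierChar
        continuous_inner (hφint k)
    have h2 : h k = fun lam => 𝓕 (φ k) ((2 * π)⁻¹ • lam) := by
      funext l
      rw [hfh k ((2 * π)⁻¹ • l), smul_smul, mul_inv_cancel₀ h2π, one_smul]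
    rw [h2]
    exact h1.comp (continuous_const_smul _)
  -- square integrability of h k
  have hhL2 : ∀ k, MemLp (h k) 2 volume := by
    intro k
    have hself : Integrable (fun lam => ⟪h k lam, h k lam⟫_ℂ) volume := by
      by_contra hne
      have h0 := horth k k
      rw [integral_undef hne] at h0
      simp at h0
    have hre : (fun lam => ‖h k lam‖ ^ 2) = fun lam => RCLike.re ⟪h k lam, h k lam⟫_ℂ := by
      funext l
      exact (inner_self_eq_norm_sq (𝕜 := ℂ) _).symm
    exact (memLp_two_iff_integrable_sq_norm (hcont k).aestronglyMeasurable).2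
      (by rw [hre]; exact hself.re)
  -- integrability of the pairings of h's
  have hwint : ∀ k l, Integrable (fun lam => ⟪h k lam, h l lam⟫_ℂ) volume := by
    intro k l
    have hint := MeasureTheory.L2.integrable_inner (𝕜 := ℂ)
      ((hhL2 k).toLp (h k)) ((hhL2 l).toLp (h l))
    refine (integrable_congr ?_).1 hint
    filter_upwards [(hhL2 k).coeFn_toLp, (hhL2 l).coeFn_toLp] with t e1 e2
    rw [e1, e2]
  have hc₁C : (c₁ : ℂ) ≠ 0 := by
    simpa using ne_of_gt hc₁
  have hden : ((c₁ * (2 * π) ^ d : ℝ) : ℂ) ≠ 0 := by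
    simp only [ne_eq, Complex.ofReal_eq_zero]
    positivity
  -- orthogonality of the φ's
  have horthφ : ∀ k l, ∫ t, ⟪φ k t, φ l t⟫_ℂ =
      (if k = l then 1 else 0) / ((c₁ * (2 * π) ^ d : ℝ) : ℂ) := by
    intro k l
    have hFeq : (fun ξ : EuclideanSpace ℝ (Fin d) => ⟪𝓕 (φ k) ξ, 𝓕 (φ l) ξ⟫_ℂ)
        = fun ξ => ⟪h k ((2 * π) • ξ), h l ((2 * π) • ξ)⟫_ℂ := by
      funext ξ
      rw [hfh k, hfh l]
    have hi : Integrable (fun ξ => ⟪𝓕 (φ k) ξ, 𝓕 (φ l) ξ⟫_ℂ) volume := by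
      rw [hFeq]
      exact (hwint k l).comp_smul h2π
    have hpar := parseval (hφL2 k) (hφL2 l) (hφint k) (hφint l) hi
    have hcv : ∫ ξ, ⟪𝓕 (φ k) ξ, 𝓕 (φ l) ξ⟫_ℂ
        = |((2 * π : ℝ) ^ Module.finrank ℝ (EuclideanSpace ℝ (Fin d)))⁻¹|
          • ∫ lamv, ⟪h k lamv, h l lamv⟫_ℂ := by
      rw [hFeq]
      exact MeasureTheory.Measure.integral_comp_smul volume
        (fun lamv => ⟪h k lamv, h l lamv⟫_ℂ) (2 * π)
    have hIv : ∫ lamv, ⟪h k lamv, h l lamv⟫_ℂ = (if k = l then 1 else 0) / (c₁ : ℂ) := by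
      rw [eq_div_iff hc₁C, mul_comm]
      exact horth k l
    rw [← hpar, hcv, hIv]
    rw [finrank_euclideanSpace_fin]
    rw [abs_of_pos (by positivity)]
    rw [Complex.real_smul]
    have hπC : ((π : ℂ)) ≠ 0 := by
      simpa using Real.pi_ne_zero
    push_cast
    field_simp
  -- the orthonormal family in L²
  set r : ℝ := Real.sqrt (c₁ * (2 * π) ^ d) with hr
  have hrpos : 0 < r := Real.sqrt_pos.2 (by positivity)
  have hr2 : r * r = c₁ * (2 * π) ^ d := Real.mul_self_sqrt (by positivity)
  set F : Fin n → Lp (EuclideanSpace ℂ (Fin p)) 2 (volume : Measure (EuclideanSpace ℝ (Fin d))) :=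
    fun k => (r : ℂ) • (hφL2 k).toLp (φ k) with hF
  have hinnerφ : ∀ k l, ⟪(hφL2 k).toLp (φ k), (hφL2 l).toLp (φ l)⟫_ℂ
      = ∫ t, ⟪φ k t, φ l t⟫_ℂ := by
    intro k l
    rw [MeasureTheory.L2.inner_def]
    refine integral_congr_ae ?_
    filter_upwards [(hφL2 k).coeFn_toLp, (hφL2 l).coeFn_toLp] with t e1 e2
    rw [e1, e2]
  have h_on : Orthonormal ℂ F := by
    rw [orthonormal_iff_ite]
    intro k l
    rw [hF]
    simp only [inner_smul_left, inner_smul_right]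
    rw [hinnerφ, horthφ k l, Complex.conj_ofReal]
    have hrr : ((r : ℂ)) * ((r : ℂ)) = ((c₁ * (2 * π) ^ d : ℝ) : ℂ) := by
      rw [← Complex.ofReal_mul, hr2]
    calc (↑r * (↑r * ((if k = l then (1:ℂ) else 0) / ↑(c₁ * (2 * π) ^ d))) : ℂ)
        = (↑r * ↑r) * ((if k = l then (1:ℂ) else 0) / ↑(c₁ * (2 * π) ^ d)) := by ring
      _ = ((c₁ * (2 * π) ^ d : ℝ) : ℂ)
            * ((if k = l then (1:ℂ) else 0) / ↑(c₁ * (2 * π) ^ d)) := by rw [hrr]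
      _ = (if k = l then (1:ℂ) else 0) := by
            rw [← mul_div_assoc, mul_div_cancel_left₀ _ hden]
  -- Bessel's inequality with indicator exponentials
  have key : ∀ i : Fin p,
      ∑ k : Fin n, (c₁ * (2 * π) ^ d) * ‖h k lam i‖ ^ 2 ≤ (2 * T) ^ d := by
    intro i
    set gfun : EuclideanSpace ℝ (Fin d) → EuclideanSpace ℂ (Fin p) :=
      (cube d T).indicator
        (fun t => EuclideanSpace.single i (Complex.exp (Complex.I * (⟪lam, t⟫_ℝ : ℂ)))) with hgfun
    have hgcont : Continuous fun t : EuclideanSpace ℝ (Fin d) =>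
        EuclideanSpace.single i (Complex.exp (Complex.I * (⟪lam, t⟫_ℝ : ℂ))) := by
      have hs : (fun t : EuclideanSpace ℝ (Fin d) =>
          EuclideanSpace.single i (Complex.exp (Complex.I * (⟪lam, t⟫_ℝ : ℂ))))
          = fun t => Complex.exp (Complex.I * (⟪lam, t⟫_ℝ : ℂ))
            • EuclideanSpace.single i (1:ℂ) := by
        funext t
        ext j
        rw [EuclideanSpace.single_apply, PiLp.smul_apply, EuclideanSpace.single_apply,
          smul_eq_mul, mul_ite, mul_one, mul_zero]
      rw [hs]
      exact (Complex.continuous_exp.comp (continuous_const.mul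
        (Complex.continuous_ofReal.comp
          (continuous_const.inner continuous_id)))).smul continuous_const
    have hgmeas : AEStronglyMeasurable gfun volume :=
      (hgcont.stronglyMeasurable.indicator (measurableSet_cube T)).aestronglyMeasurable
    have hnorm1 : ∀ t : EuclideanSpace ℝ (Fin d),
        ‖Complex.exp (Complex.I * (⟪lam, t⟫_ℝ : ℂ))‖ = 1 := by
      intro t
      rw [mul_comm, Complex.norm_exp_ofReal_mul_I]
    have hsq : (fun t => ‖gfun t‖ ^ 2) = (cube d T).indicator (fun _ => (1:ℝ)) := by
      funext t
      by_cases ht : t ∈ cube d T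
      · rw [hgfun, Set.indicator_of_mem ht, Set.indicator_of_mem ht,
          EuclideanSpace.norm_single, hnorm1, one_pow]
      · rw [hgfun, Set.indicator_of_notMem ht, Set.indicator_of_notMem ht, norm_zero]
        norm_num
    have hgL2 : MemLp gfun 2 volume := by
      refine (memLp_two_iff_integrable_sq_norm hgmeas).2 ?_
      rw [hsq]
      exact (integrable_indicator_iff (measurableSet_cube T)).2
        (integrableOn_const (volume_cube_lt_top hT).ne)
    have hginner : ∀ k, ∫ t, ⟪gfun t, φ k t⟫_ℂ = h k lam i := by
      intro k
      have hint : Integrable (fun t : EuclideanSpace ℝ (Fin d) =>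
          Complex.exp (-Complex.I * ((⟪lam, t⟫_ℝ : ℝ) : ℂ)) • φ k t) volume := by
        have hform : ∀ t : EuclideanSpace ℝ (Fin d),
            Complex.exp (-Complex.I * ((⟪lam, t⟫_ℝ : ℝ) : ℂ))
              = Complex.exp (((-⟪lam, t⟫_ℝ : ℝ) : ℂ) * Complex.I) := by
          intro t; congr 1; push_cast; ring
        simp only [hform]
        exact integrable_exp_smul (hφint k) ((continuous_const.inner continuous_id).neg)
      have heq : ∀ t, ⟪gfun t, φ k t⟫_ℂ
          = Complex.exp (-Complex.I * ((⟪lam, t⟫_ℝ : ℝ) : ℂ)) * (φ k t i) := by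
        intro t
        by_cases ht : t ∈ cube d T
        · rw [hgfun, Set.indicator_of_mem ht, EuclideanSpace.inner_single_left]
          congr 1
          rw [← Complex.exp_conj]
          congr 1
          simp only [map_mul, Complex.conj_I, Complex.conj_ofReal]
          try ring
        · rw [hgfun, Set.indicator_of_notMem ht, inner_zero_left]
          have hz : φ k t = 0 := hsupp k t (by simpa [cube, not_forall] using ht)
          simp [hz]
      simp only [heq]
      rw [hdef k lam]
      calc ∫ t, Complex.exp (-Complex.I * ((⟪lam, t⟫_ℝ : ℝ) : ℂ)) * (φ k t i)
          = ∫ t, (EuclideanSpace.proj i)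
              (Complex.exp (-Complex.I * ((⟪lam, t⟫_ℝ : ℝ) : ℂ)) • φ k t) := rfl
        _ = (EuclideanSpace.proj i)
              (∫ t, Complex.exp (-Complex.I * ((⟪lam, t⟫_ℝ : ℝ) : ℂ)) • φ k t) :=
            ContinuousLinearMap.integral_comp_comm _ hint
        _ = (∫ t, Complex.exp (-Complex.I * ((⟪lam, t⟫_ℝ : ℝ) : ℂ)) • φ k t) i := rfl
    set G : Lp (EuclideanSpace ℂ (Fin p)) 2 (volume : Measure (EuclideanSpace ℝ (Fin d))) :=
      hgL2.toLp gfun with hG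
    have hGF : ∀ k, ⟪G, F k⟫_ℂ = (r : ℂ) * (h k lam i) := by
      intro k
      rw [hF]
      simp only [inner_smul_right]
      congr 1
      have hGk : ⟪G, (hφL2 k).toLp (φ k)⟫_ℂ = ∫ t, ⟪gfun t, φ k t⟫_ℂ := by
        rw [MeasureTheory.L2.inner_def]
        refine integral_congr_ae ?_
        filter_upwards [hgL2.coeFn_toLp, (hφL2 k).coeFn_toLp] with t e1 e2
        rw [e1, e2]
      rw [hGk, hginner k]
    have hGsq : ‖G‖ ^ 2 = (2 * T) ^ d := by
      have hpt : (fun t => ⟪gfun t, gfun t⟫_ℂ) = (cube d T).indicator (fun _ => (1:ℂ)) := by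
        funext t
        by_cases ht : t ∈ cube d T
        · rw [hgfun, Set.indicator_of_mem ht, Set.indicator_of_mem ht,
            inner_self_eq_norm_sq_to_K, EuclideanSpace.norm_single, hnorm1]
          norm_num
        · rw [hgfun, Set.indicator_of_notMem ht, Set.indicator_of_notMem ht]
          simp
      have hGG : ⟪G, G⟫_ℂ = (((2 * T) ^ d : ℝ) : ℂ) := by
        rw [MeasureTheory.L2.inner_def]
        have hae : (fun t => ⟪(G : EuclideanSpace ℝ (Fin d) → EuclideanSpace ℂ (Fin p)) t,
            (G : EuclideanSpace ℝ (Fin d) → EuclideanSpace ℂ (Fin p)) t⟫_ℂ)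
            =ᵐ[volume] fun t => ⟪gfun t, gfun t⟫_ℂ := by
          filter_upwards [hgL2.coeFn_toLp] with t e1
          rw [e1]
        rw [integral_congr_ae hae, hpt, integral_indicator_const (1:ℂ) (measurableSet_cube T)]
        rw [measureReal_def, volume_cube hT, ENNReal.toReal_ofReal (by positivity)]
        rw [Complex.real_smul, mul_one]
      have hre := inner_self_eq_norm_sq (𝕜 := ℂ) G
      rw [hGG] at hre
      rw [← hre, RCLike.re_to_complex, Complex.ofReal_re]
    have hbessel := h_on.sum_inner_products_le (x := G) (s := Finset.univ)
    have hterm : ∀ k : Fin n, ‖⟪F k, G⟫_ℂ‖ ^ 2 = (c₁ * (2 * π) ^ d) * ‖h k lam i‖ ^ 2 := by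
      intro k
      rw [norm_inner_symm, hGF k, norm_mul, Complex.norm_real, Real.norm_eq_abs,
        abs_of_pos hrpos, mul_pow, sq, hr2]
    calc ∑ k : Fin n, (c₁ * (2 * π) ^ d) * ‖h k lam i‖ ^ 2
        = ∑ k : Fin n, ‖⟪F k, G⟫_ℂ‖ ^ 2 := by
          refine Finset.sum_congr rfl fun k _ => (hterm k).symm
      _ ≤ ‖G‖ ^ 2 := hbessel
      _ = (2 * T) ^ d := hGsq
  -- assemble
  have hsumnorm : ∀ k : Fin n, ‖h k lam‖ ^ 2 = ∑ i : Fin p, ‖h k lam i‖ ^ 2 := by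
    intro k
    rw [EuclideanSpace.norm_eq, Real.sq_sqrt (Finset.sum_nonneg fun i _ => sq_nonneg _)]
  have main : (c₁ * (2 * π) ^ d) * ∑ k : Fin n, ‖h k lam‖ ^ 2 ≤ p * (2 * T) ^ d := by
    calc (c₁ * (2 * π) ^ d) * ∑ k : Fin n, ‖h k lam‖ ^ 2
        = ∑ i : Fin p, ∑ k : Fin n, (c₁ * (2 * π) ^ d) * ‖h k lam i‖ ^ 2 := by
          rw [Finset.mul_sum]
          simp_rw [hsumnorm, Finset.mul_sum]
          rw [Finset.sum_comm]
      _ ≤ ∑ _i : Fin p, (2 * T) ^ d := Finset.sum_le_sum fun i _ => key i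
      _ = p * (2 * T) ^ d := by
          rw [Finset.sum_const, Finset.card_univ, Fintype.card_fin, nsmul_eq_mul]
  rw [le_div_iff₀ (by positivity)]
  calc (∑ k : Fin n, ‖h k lam‖ ^ 2) * (c₁ * (2 * π) ^ d)
      = (c₁ * (2 * π) ^ d) * ∑ k : Fin n, ‖h k lam‖ ^ 2 := by ring
    _ ≤ p * (2 * T) ^ d := main
end

section
/- Let d ∈ {1,2,3}, ν > 0, and α₁₁, α₂₂, α₁₂, σ₁₁, σ₂₂ > 0, ρ₁₂ ∈ (−1,1). Define the bivariate Matérn spectral density matrix F(λ) with entries F_{ij}(λ) = ρ_{ij} σ_{ii} σ_{jj} (Γ(ν+d/2)/(Γ(ν) π^{d/2})) α_{ij}^d (1 + α_{ij}² ‖λ‖²)^{−ν−d/2}, where ρ₁₁ = ρ₂₂ = 1 and α₂₁ = α₁₂. If ρ₁₂² < (α₁₂^{4ν}/(α₁₁^{2ν} α₂₂^{2ν})) · inf_{t≥0} (α₁₂^{−2}+t²)^{2ν+d} / ((α₁₁^{−2}+t²)^{ν+d/2}(α₂₂^{−2}+t²)^{ν+d/2}), then there exist constants 0 < c < c' < ∞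 such that for all λ ∈ ℝ^d, c (1+‖λ‖)^{−2ν−d} I₂ ≤ F(λ) ≤ c' (1+‖λ‖)^{−2ν−d} I₂ in the Loewner order. -/
open Matrix

/-- The Matérn isotropic spectral density in ℝ^d. -/
noncomputable def maternHat (d : ℕ) (ν α z : ℝ) : ℝ :=
  Real.Gamma (ν + d / 2) / (Real.pi ^ ((d : ℝ) / 2) * Real.Gamma ν) *
    α ^ (d : ℕ) * (1 + α ^ 2 * z ^ 2) ^ (-ν - d / 2)

/-- The bivariate Matérn spectral density matrix. -/
noncomputable def bivMaternHat (d : ℕ) (ν α₁₁ α₂₂ α₁₂ σ₁₁ σ₂₂ ρ₁₂ z : ℝ) :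
    Matrix (Fin 2) (Fin 2) ℝ :=
  !![σ₁₁ * σ₁₁ * maternHat d ν α₁₁ z, ρ₁₂ * σ₁₁ * σ₂₂ * maternHat d ν α₁₂ z;
     ρ₁₂ * σ₁₁ * σ₂₂ * maternHat d ν α₁₂ z, σ₂₂ * σ₂₂ * maternHat d ν α₂₂ z]

/-! Each Matérn density is comparable to `(1 + z) ^ (-2ν - d)` on `z ≥ 0`, which bounds the
diagonal of `F` from both sides. The exact identity
`M̂_{α₁₂}(z)² · α₁₂^{4ν} / (α₁₁^{2ν} α₂₂^{2ν}) · r(z) = M̂_{α₁₁}(z) · M̂_{α₂₂}(z)`, with `r` the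
ratio whose infimum appears in the hypothesis, turns the hypothesis into `F₁₂² ≤ θ F₁₁ F₂₂` for a
single `θ < 1`. For a symmetric 2×2 matrix the smallest eigenvalue is at least
`det / tr ≥ (1 - θ) F₁₁ F₂₂ / (F₁₁ + F₂₂)` and the largest at most `tr`, so both are comparable
to `(1 + ‖λ‖) ^ (-2ν - d)`. -/

namespace Matrix

theorem posSemidef_fin_two_of {a b e : ℝ} (ha : 0 ≤ a) (he : 0 ≤ e) (hb : b ^ 2 ≤ a * e) :
    (!![a, b; b, e] : Matrix (Fin 2) (Fin 2) ℝ).PosSemidef := by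
  refine posSemidef_iff_dotProduct_mulVec.2 ⟨?_, fun x ↦ ?_⟩
  · ext i j
    fin_cases i <;> fin_cases j <;> rfl
  · have hq : star x ⬝ᵥ !![a, b; b, e] *ᵥ x =
        a * x 0 ^ 2 + 2 * b * x 0 * x 1 + e * x 1 ^ 2 := by
      simp only [dotProduct, Pi.star_apply, star_trivial, mulVec, of_apply, cons_val',
        cons_val_fin_one, Fin.sum_univ_two, Fin.isValue, cons_val_zero, cons_val_one]
      ring
    rw [hq]
    rcases he.eq_or_lt with rfl | he
    · obtain rfl : b = 0 := by nlinarith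
      nlinarith
    · nlinarith [sq_nonneg (e * x 1 + b * x 0)]

theorem posSemidef_fin_two_sub_smul_one {a b e t : ℝ} (hta : t ≤ a) (hte : t ≤ e)
    (hdet : b ^ 2 + t * (a + e) ≤ a * e) :
    (!![a, b; b, e] - t • 1 : Matrix (Fin 2) (Fin 2) ℝ).PosSemidef := by
  have hM : !![a, b; b, e] - t • 1 = !![a - t, b; b, e - t] := by
    ext i j; fin_cases i <;> fin_cases j <;> simp
  rw [hM]
  exact posSemidef_fin_two_of (by linarith) (by linarith) (by nlinarith [sq_nonneg t])

theorem posSemidef_smul_one_sub_fin_two {a b e s : ℝ} (ha : 0 ≤ a) (he : 0 ≤ e)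
    (hb : b ^ 2 ≤ a * e) (hs : a + e ≤ s) :
    (s • 1 - !![a, b; b, e] : Matrix (Fin 2) (Fin 2) ℝ).PosSemidef := by
  have hM : s • 1 - !![a, b; b, e] = !![s - a, -b; -b, s - e] := by
    ext i j; fin_cases i <;> fin_cases j <;> simp
  rw [hM]
  exact posSemidef_fin_two_of (by linarith) (by linarith) (by nlinarith)

theorem exists_posSemidef_sandwich_fin_two {X : Type*} {a b e W : X → ℝ} {La Ua Le Ue θ : ℝ}
    (hLa : 0 < La) (hLe : 0 < Le) (hUa : 0 < Ua) (hUe : 0 < Ue) (hθ : θ < 1)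
    (hW : ∀ x, 0 < W x) (ha : ∀ x, La * W x ≤ a x ∧ a x ≤ Ua * W x)
    (he : ∀ x, Le * W x ≤ e x ∧ e x ≤ Ue * W x) (hb : ∀ x, b x ^ 2 ≤ θ * (a x * e x)) :
    ∃ c c' : ℝ, 0 < c ∧ c < c' ∧ ∀ x,
      (!![a x, b x; b x, e x] - (c * W x) • 1).PosSemidef ∧
      ((c' * W x) • 1 - !![a x, b x; b x, e x]).PosSemidef := by
  set S := Ua + Ue
  set c := min (min La Le) ((1 - θ) * La * Le / S)
  have hS : 0 < S := add_pos hUa hUe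
  have hθ' : 0 < 1 - θ := by linarith
  have hc : 0 < c := lt_min (lt_min hLa hLe) (by positivity)
  have hcS : c * S ≤ (1 - θ) * La * Le := (le_div_iff₀ hS).1 (min_le_right _ _)
  refine ⟨c, c + S, hc, by linarith, fun x ↦ ?_⟩
  obtain ⟨hax, hax'⟩ := ha x
  obtain ⟨hex, hex'⟩ := he x
  have hWx := hW x
  have ha0 : 0 < a x := (mul_pos hLa hWx).trans_le hax
  have he0 : 0 < e x := (mul_pos hLe hWx).trans_le hex
  have hcW_a : c * W x ≤ a x :=
    le_trans (by gcongr; exact (min_le_left _ _).trans (min_le_left _ _)) hax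
  have hcW_e : c * W x ≤ e x :=
    le_trans (by gcongr; exact (min_le_left _ _).trans (min_le_right _ _)) hex
  have hae : La * W x * (Le * W x) ≤ a x * e x := mul_le_mul hax hex (by positivity) ha0.le
  have hsum : a x + e x ≤ S * W x := by linarith
  have hb' : b x ^ 2 ≤ a x * e x := (hb x).trans (by nlinarith [mul_pos ha0 he0])
  constructor
  · refine posSemidef_fin_two_sub_smul_one hcW_a hcW_e ?_
    calc b x ^ 2 + c * W x * (a x + e x) ≤ θ * (a x * e x) + c * S * W x ^ 2 := by
          nlinarith [hb x, mul_le_mul_of_nonneg_left hsum (mul_pos hc hWx).le]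
      _ ≤ θ * (a x * e x) + (1 - θ) * (La * W x * (Le * W x)) := by
          nlinarith [mul_le_mul_of_nonneg_right hcS (sq_nonneg (W x))]
      _ ≤ a x * e x := by nlinarith [mul_le_mul_of_nonneg_left hae hθ'.le]
  · exact posSemidef_smul_one_sub_fin_two ha0.le he0.le hb' (by nlinarith)

end Matrix

noncomputable def maternConst (d : ℕ) (ν : ℝ) : ℝ :=
  Real.Gamma (ν + d / 2) / (Real.pi ^ ((d : ℝ) / 2) * Real.Gamma ν)

lemma maternConst_pos (d : ℕ) {ν : ℝ} (hν : 0 < ν) : 0 < maternConst d ν :=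
  div_pos (Real.Gamma_pos_of_pos (by positivity))
    (mul_pos (by positivity) (Real.Gamma_pos_of_pos hν))

lemma maternHat_eq_div (d : ℕ) (ν z : ℝ) {α : ℝ} (hα : 0 < α) :
    maternHat d ν α z =
      maternConst d ν / (α ^ (2 * ν) * (α ^ (-2 : ℤ) + z ^ 2) ^ (ν + d / 2)) := by
  have hbase : 1 + α ^ 2 * z ^ 2 = α ^ 2 * (α ^ (-2 : ℤ) + z ^ 2) := by
    field_simp
  have hpow : (α ^ 2) ^ (ν + d / 2 : ℝ) = α ^ (2 * ν) * α ^ d := by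
    rw [← Real.rpow_natCast α 2, ← Real.rpow_mul hα.le, ← Real.rpow_natCast α d,
      ← Real.rpow_add hα]
    congr 1
    push_cast
    ring
  have hX : 0 < α ^ (-2 : ℤ) + z ^ 2 := by positivity
  rw [maternHat, maternConst, hbase, show -ν - (d : ℝ) / 2 = -(ν + d / 2) by ring,
    Real.rpow_neg (by positivity), Real.mul_rpow (by positivity) hX.le, hpow]
  field_simp

lemma exists_rpow_add_sq_comparable {A p : ℝ} (hA : 0 < A) (hp : 0 ≤ p) :
    ∃ C > 0, ∀ z : ℝ, 0 ≤ z →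
      (A + z ^ 2) ^ p ≤ C * (1 + z) ^ (2 * p) ∧ (1 + z) ^ (2 * p) ≤ C * (A + z ^ 2) ^ p := by
  set M := 2 * (A + 1 + A⁻¹)
  have hM : 0 < M := by positivity
  have hAinv : A * A⁻¹ = 1 := mul_inv_cancel₀ hA.ne'
  have hrpow : ∀ x y : ℝ, 0 ≤ x → 0 ≤ y → x ≤ M * y → x ^ p ≤ M ^ p * y ^ p :=
    fun x y hx hy h ↦ (Real.rpow_le_rpow hx h hp).trans_eq (Real.mul_rpow hM.le hy)
  refine ⟨M ^ p, by positivity, fun z hz ↦ ?_⟩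
  rw [Real.rpow_mul (by positivity), Real.rpow_two]
  exact ⟨hrpow _ _ (by positivity) (by positivity) (by nlinarith [inv_pos.2 hA]),
    hrpow _ _ (by positivity) (by positivity)
      (by nlinarith [sq_nonneg (1 - z), mul_nonneg (inv_pos.2 hA).le (sq_nonneg z)])⟩

lemma exists_maternHat_comparable (d : ℕ) {ν α : ℝ} (hν : 0 < ν) (hα : 0 < α) :
    ∃ L U : ℝ, 0 < L ∧ 0 < U ∧ ∀ z : ℝ, 0 ≤ z →
      L * (1 + z) ^ (-(2 * ν) - d) ≤ maternHat d ν α z ∧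
        maternHat d ν α z ≤ U * (1 + z) ^ (-(2 * ν) - d) := by
  obtain ⟨C, hC, hcomp⟩ := exists_rpow_add_sq_comparable (A := α ^ (-2 : ℤ)) (p := ν + d / 2)
    (by positivity) (by positivity)
  set K := maternConst d ν / α ^ (2 * ν)
  have hK : 0 < K := div_pos (maternConst_pos d hν) (by positivity)
  refine ⟨K / C, K * C, by positivity, by positivity, fun z hz ↦ ?_⟩
  obtain ⟨hXY, hYX⟩ := hcomp z hz
  have hX : 0 < (α ^ (-2 : ℤ) + z ^ 2) ^ (ν + d / 2) := by positivity
  have hY : 0 < (1 + z) ^ (2 * (ν + d / 2)) := by positivity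
  rw [show -(2 * ν) - (d : ℝ) = -(2 * (ν + d / 2)) by ring, Real.rpow_neg (by positivity),
    maternHat_eq_div d ν z hα, ← div_div, ← div_eq_mul_inv, ← div_eq_mul_inv, div_div]
  constructor
  · exact div_le_div_of_nonneg_left hK.le hX hXY
  · rw [div_le_div_iff₀ hX hY]
    exact mul_le_mul_of_nonneg_left hYX hK.le |>.trans_eq (mul_assoc _ _ _).symm

noncomputable def maternCrossRatio (d : ℕ) (ν α₁₁ α₂₂ α₁₂ t : ℝ) : ℝ :=
  (α₁₂ ^ (-2 : ℤ) + t ^ 2) ^ (2 * ν + d) /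
    ((α₁₁ ^ (-2 : ℤ) + t ^ 2) ^ (ν + d / 2) * (α₂₂ ^ (-2 : ℤ) + t ^ 2) ^ (ν + d / 2))

lemma maternHat_sq_mul_crossRatio (d : ℕ) (ν z : ℝ) {α₁₁ α₂₂ α₁₂ : ℝ}
    (hα₁₁ : 0 < α₁₁) (hα₂₂ : 0 < α₂₂) (hα₁₂ : 0 < α₁₂) :
    maternHat d ν α₁₂ z ^ 2 * (α₁₂ ^ (4 * ν) / (α₁₁ ^ (2 * ν) * α₂₂ ^ (2 * ν)) *
        maternCrossRatio d ν α₁₁ α₂₂ α₁₂ z) =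
      maternHat d ν α₁₁ z * maternHat d ν α₂₂ z := by
  have hsplit : ∀ {x : ℝ}, 0 < x → ∀ a : ℝ, x ^ (2 * a) = x ^ a * x ^ a := fun hx a ↦ by
    rw [two_mul, Real.rpow_add hx]
  rw [maternCrossRatio, maternHat_eq_div d ν z hα₁₁, maternHat_eq_div d ν z hα₂₂,
    maternHat_eq_div d ν z hα₁₂, show 4 * ν = 2 * (2 * ν) by ring, hsplit hα₁₂ (2 * ν),
    show 2 * ν + (d : ℝ) = 2 * (ν + d / 2) by ring,
    hsplit (by positivity : 0 < α₁₂ ^ (-2 : ℤ) + z ^ 2)]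
  field_simp

lemma exists_sq_mul_maternHat_sq_le {d : ℕ} {ν α₁₁ α₂₂ α₁₂ ρ : ℝ}
    (hα₁₁ : 0 < α₁₁) (hα₂₂ : 0 < α₂₂) (hα₁₂ : 0 < α₁₂)
    (hρ : ρ ^ 2 < α₁₂ ^ (4 * ν) / (α₁₁ ^ (2 * ν) * α₂₂ ^ (2 * ν)) *
      ⨅ t : Set.Ici (0 : ℝ), maternCrossRatio d ν α₁₁ α₂₂ α₁₂ t) :
    ∃ θ < 1, ∀ z : ℝ, 0 ≤ z →
      ρ ^ 2 * maternHat d ν α₁₂ z ^ 2 ≤ θ * (maternHat d ν α₁₁ z * maternHat d ν α₂₂ z) := by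
  set A := α₁₂ ^ (4 * ν) / (α₁₁ ^ (2 * ν) * α₂₂ ^ (2 * ν))
  set κ := A * ⨅ t : Set.Ici (0 : ℝ), maternCrossRatio d ν α₁₁ α₂₂ α₁₂ t
  have hκ : 0 < κ := (sq_nonneg ρ).trans_lt hρ
  have hκle : ∀ z : ℝ, 0 ≤ z → κ ≤ A * maternCrossRatio d ν α₁₁ α₂₂ α₁₂ z := fun z hz ↦ by
    refine mul_le_mul_of_nonneg_left (ciInf_le ⟨0, ?_⟩ (⟨z, hz⟩ : Set.Ici (0 : ℝ)))
      (by positivity)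
    rintro _ ⟨t, rfl⟩
    dsimp only [maternCrossRatio]
    positivity
  refine ⟨ρ ^ 2 / κ, (div_lt_one hκ).2 hρ, fun z hz ↦ ?_⟩
  rw [← maternHat_sq_mul_crossRatio d ν z hα₁₁ hα₂₂ hα₁₂]
  calc ρ ^ 2 * maternHat d ν α₁₂ z ^ 2 = ρ ^ 2 / κ * (maternHat d ν α₁₂ z ^ 2 * κ) := by
        field_simp
    _ ≤ _ := by gcongr; exact hκle z hz

theorem stmt8_general (d : ℕ) (ν α₁₁ α₂₂ α₁₂ σ₁₁ σ₂₂ ρ₁₂ : ℝ)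
    (hν : 0 < ν) (hα₁₁ : 0 < α₁₁) (hα₂₂ : 0 < α₂₂) (hα₁₂ : 0 < α₁₂)
    (hσ₁₁ : 0 < σ₁₁) (hσ₂₂ : 0 < σ₂₂)
    (hcond : ρ₁₂ ^ 2 <
      α₁₂ ^ (4 * ν) / (α₁₁ ^ (2 * ν) * α₂₂ ^ (2 * ν)) *
        ⨅ t : Set.Ici (0 : ℝ),
          (α₁₂ ^ (-2 : ℤ) + (t : ℝ) ^ 2) ^ (2 * ν + d) /
            ((α₁₁ ^ (-2 : ℤ) + (t : ℝ) ^ 2) ^ (ν + d / 2) *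
              (α₂₂ ^ (-2 : ℤ) + (t : ℝ) ^ 2) ^ (ν + d / 2))) :
    ∃ c c' : ℝ, 0 < c ∧ c < c' ∧ ∀ lam : EuclideanSpace ℝ (Fin d),
      (bivMaternHat d ν α₁₁ α₂₂ α₁₂ σ₁₁ σ₂₂ ρ₁₂ ‖lam‖ -
        (c * (1 + ‖lam‖) ^ (-(2 * ν) - d)) • (1 : Matrix (Fin 2) (Fin 2) ℝ)).PosSemidef ∧
      ((c' * (1 + ‖lam‖) ^ (-(2 * ν) - d)) • (1 : Matrix (Fin 2) (Fin 2) ℝ) -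
        bivMaternHat d ν α₁₁ α₂₂ α₁₂ σ₁₁ σ₂₂ ρ₁₂ ‖lam‖).PosSemidef := by
  obtain ⟨L₁, U₁, hL₁, hU₁, h₁⟩ := exists_maternHat_comparable d hν hα₁₁
  obtain ⟨L₂, U₂, hL₂, hU₂, h₂⟩ := exists_maternHat_comparable d hν hα₂₂
  obtain ⟨θ, hθ, hoff⟩ := exists_sq_mul_maternHat_sq_le hα₁₁ hα₂₂ hα₁₂ hcond
  have hscale : ∀ {s L m U W : ℝ}, 0 ≤ s → L * W ≤ m ∧ m ≤ U * W →
      s * L * W ≤ s * m ∧ s * m ≤ s * U * W := fun hs ⟨hl, hu⟩ ↦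
    ⟨by simpa only [mul_assoc] using mul_le_mul_of_nonneg_left hl hs,
      by simpa only [mul_assoc] using mul_le_mul_of_nonneg_left hu hs⟩
  exact Matrix.exists_posSemidef_sandwich_fin_two (by positivity : 0 < σ₁₁ * σ₁₁ * L₁)
    (by positivity : 0 < σ₂₂ * σ₂₂ * L₂) (by positivity : 0 < σ₁₁ * σ₁₁ * U₁)
    (by positivity : 0 < σ₂₂ * σ₂₂ * U₂) hθ (fun lam ↦ by positivity)
    (fun lam ↦ hscale (mul_self_nonneg σ₁₁) (h₁ _ (norm_nonneg lam)))
    (fun lam ↦ hscale (mul_self_nonneg σ₂₂) (h₂ _ (norm_nonneg lam)))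
    fun lam ↦ by linear_combination (σ₁₁ * σ₂₂) ^ 2 * hoff _ (norm_nonneg lam)

/-- Under the validity condition on the colocated correlation, the bivariate Matérn spectral
matrix is bounded above and below, in the Loewner order, by constant multiples of
`(1+‖λ‖)^{−2ν−d} I₂`. -/
theorem stmt8 (d : ℕ) (hd : d ∈ ({1, 2, 3} : Set ℕ)) (ν α₁₁ α₂₂ α₁₂ σ₁₁ σ₂₂ ρ₁₂ : ℝ)
    (hν : 0 < ν) (hα₁₁ : 0 < α₁₁) (hα₂₂ : 0 < α₂₂) (hα₁₂ : 0 < α₁₂)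
    (hσ₁₁ : 0 < σ₁₁) (hσ₂₂ : 0 < σ₂₂) (hρ : ρ₁₂ ∈ Set.Ioo (-1 : ℝ) 1)
    (hcond : ρ₁₂ ^ 2 <
      α₁₂ ^ (4 * ν) / (α₁₁ ^ (2 * ν) * α₂₂ ^ (2 * ν)) *
        ⨅ t : Set.Ici (0 : ℝ),
          (α₁₂ ^ (-2 : ℤ) + (t : ℝ) ^ 2) ^ (2 * ν + d) /
            ((α₁₁ ^ (-2 : ℤ) + (t : ℝ) ^ 2) ^ (ν + d / 2) *
              (α₂₂ ^ (-2 : ℤ) + (t : ℝ) ^ 2) ^ (ν + d / 2))) :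
    ∃ c c' : ℝ, 0 < c ∧ c < c' ∧ ∀ lam : EuclideanSpace ℝ (Fin d),
      (bivMaternHat d ν α₁₁ α₂₂ α₁₂ σ₁₁ σ₂₂ ρ₁₂ ‖lam‖ -
        (c * (1 + ‖lam‖) ^ (-(2 * ν) - d)) • (1 : Matrix (Fin 2) (Fin 2) ℝ)).PosSemidef ∧
      ((c' * (1 + ‖lam‖) ^ (-(2 * ν) - d)) • (1 : Matrix (Fin 2) (Fin 2) ℝ) -
        bivMaternHat d ν α₁₁ α₂₂ α₁₂ σ₁₁ σ₂₂ ρ₁₂ ‖lam‖).PosSemidef :=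
  stmt8_general d ν α₁₁ α₂₂ α₁₂ σ₁₁ σ₂₂ ρ₁₂ hν hα₁₁ hα₂₂ hα₁₂ hσ₁₁ hσ₂₂ hcond
end

section
/- For a = 0, 1 let c_a > 0 and α_a > 0, and suppose c₀ = c₁ (equal leading constants). Then for d ∈ {1,2,3}, the integral ∫_{ℝ^d} (1+‖λ‖)^{4r} ( c₀ (α₀^{−2} + ‖λ‖²)^{−r} − c₁ (α₁^{−2} + ‖λ‖²)^{−r} )² dλ is finite, where r = ν + d/2 for any ν > 0. -/
open MeasureTheory Real

/-- Mean value theorem bound for `x ↦ x ^ (-r)` on `[m, ∞)`. -/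
lemma mvt_rpow_neg (r : ℝ) (hr : 0 < r) {m x y : ℝ} (hm : 0 < m) (hx : m ≤ x) (hy : m ≤ y) :
    |x ^ (-r) - y ^ (-r)| ≤ r * m ^ (-r - 1) * |x - y| := by
  have key : ∀ z ∈ Set.Ici m, HasDerivWithinAt (fun u : ℝ => u ^ (-r))
      ((-r) * z ^ (-r - 1)) (Set.Ici m) z := by
    intro z hz
    have hz0 : z ≠ 0 := (lt_of_lt_of_le hm hz).ne'
    exact (Real.hasDerivAt_rpow_const (Or.inl hz0)).hasDerivWithinAt
  have bound : ∀ z ∈ Set.Ici m, ‖(-r) * z ^ (-r - 1)‖ ≤ r * m ^ (-r - 1) := by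
    intro z hz
    have hz0 : 0 < z := lt_of_lt_of_le hm hz
    rw [norm_mul, Real.norm_eq_abs, Real.norm_eq_abs, abs_neg, abs_of_pos hr,
      abs_of_pos (Real.rpow_pos_of_pos hz0 _)]
    have : z ^ (-r - 1) ≤ m ^ (-r - 1) :=
      Real.rpow_le_rpow_of_nonpos hm hz (by linarith)
    nlinarith [Real.rpow_pos_of_pos hm (-r - 1)]
  have h := (convex_Ici m).norm_image_sub_le_of_norm_hasDerivWithin_le key bound hx hy
  simpa [Real.norm_eq_abs, abs_sub_comm] using h

/-- Pointwise bound for the integrand. -/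
lemma pointwise_bound (r a b : ℝ) (hr : 0 < r) (ha : 0 < a) (hb : 0 < b) (s : ℝ) (hs : 0 ≤ s) :
    (1 + s) ^ (4 * r) * ((a + s ^ 2) ^ (-r) - (b + s ^ 2) ^ (-r)) ^ 2 ≤
      r ^ 2 * (a - b) ^ 2 * (2 * max 1 (min a b)⁻¹) ^ (2 * r + 2) * (1 + s) ^ (-4 : ℝ) := by
  set m : ℝ := min a b with hm
  have hm0 : 0 < m := lt_min ha hb
  set K : ℝ := 2 * max 1 m⁻¹ with hK
  have hK1 : 1 ≤ K := by
    have : (1 : ℝ) ≤ max 1 m⁻¹ := le_max_left _ _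
    nlinarith
  have hK0 : 0 < K := lt_of_lt_of_le one_pos hK1
  have h1s : 0 < 1 + s := by linarith
  -- (1+s)^2 ≤ K * (m + s^2)
  have hsq : (1 + s) ^ 2 ≤ K * (m + s ^ 2) := by
    have h1 : (1 : ℝ) ≤ max 1 m⁻¹ := le_max_left _ _
    have h2 : m⁻¹ ≤ max 1 m⁻¹ := le_max_right _ _
    have h3 : 1 ≤ max 1 m⁻¹ * m := by
      nlinarith [mul_le_mul_of_nonneg_right h2 hm0.le, inv_mul_cancel₀ hm0.ne']
    nlinarith [sq_nonneg (1 - s), sq_nonneg s]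
  have hms : 0 < m + s ^ 2 := by positivity
  -- MVT bound on the difference
  have hdiff : |(a + s ^ 2) ^ (-r) - (b + s ^ 2) ^ (-r)| ≤
      r * (m + s ^ 2) ^ (-r - 1) * |a - b| := by
    have hxa : m + s ^ 2 ≤ a + s ^ 2 := by
      have : m ≤ a := min_le_left a b; linarith
    have hxb : m + s ^ 2 ≤ b + s ^ 2 := by
      have : m ≤ b := min_le_right a b; linarith
    have h := mvt_rpow_neg r hr hms hxa hxb
    have he : a + s ^ 2 - (b + s ^ 2) = a - b := by ring
    rwa [he] at h
  have hdiff2 : ((a + s ^ 2) ^ (-r) - (b + s ^ 2) ^ (-r)) ^ 2 ≤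
      r ^ 2 * (a - b) ^ 2 * ((m + s ^ 2) ^ (-r - 1)) ^ 2 := by
    have h1 : ((a + s ^ 2) ^ (-r) - (b + s ^ 2) ^ (-r)) ^ 2 ≤
        (r * (m + s ^ 2) ^ (-r - 1) * |a - b|) ^ 2 := by
      rw [← sq_abs]
      exact pow_le_pow_left₀ (abs_nonneg _) hdiff 2
    calc ((a + s ^ 2) ^ (-r) - (b + s ^ 2) ^ (-r)) ^ 2
        ≤ (r * (m + s ^ 2) ^ (-r - 1) * |a - b|) ^ 2 := h1
      _ = r ^ 2 * (a - b) ^ 2 * ((m + s ^ 2) ^ (-r - 1)) ^ 2 := by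
          rw [mul_pow, mul_pow, sq_abs]; ring
  -- lower bound for m + s^2 in terms of (1+s)
  have hlow : (1 + s) ^ (2 : ℝ) * K⁻¹ ≤ m + s ^ 2 := by
    rw [Real.rpow_two, ← div_eq_mul_inv, div_le_iff₀ hK0]
    nlinarith
  have hlow0 : 0 < (1 + s) ^ (2 : ℝ) * K⁻¹ := by positivity
  have hmono : (m + s ^ 2) ^ (-r - 1) ≤ ((1 + s) ^ (2 : ℝ) * K⁻¹) ^ (-r - 1) :=
    Real.rpow_le_rpow_of_nonpos hlow0 hlow (by linarith)
  have hcomp : ((1 + s) ^ (2 : ℝ) * K⁻¹) ^ (-r - 1) =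
      (1 + s) ^ (2 * (-r - 1)) * K ^ (r + 1) := by
    have e : (-r - 1 : ℝ) = -(r + 1) := by ring
    rw [Real.mul_rpow (by positivity) (by positivity), ← Real.rpow_mul h1s.le,
      Real.inv_rpow hK0.le, e, Real.rpow_neg hK0.le, inv_inv]
  have hW : 0 ≤ (1 + s) ^ (4 * r) := (Real.rpow_pos_of_pos h1s _).le
  have hA : ((1 + s) ^ (2 * (-r - 1))) ^ 2 = (1 + s) ^ (-(4 * r) - 4) := by
    rw [← Real.rpow_natCast ((1 + s) ^ (2 * (-r - 1))) 2, ← Real.rpow_mul h1s.le]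
    congr 1; push_cast; ring
  have hB : (K ^ (r + 1)) ^ 2 = K ^ (2 * r + 2) := by
    rw [← Real.rpow_natCast (K ^ (r + 1)) 2, ← Real.rpow_mul hK0.le]
    congr 1; push_cast; ring
  have hC : (1 + s) ^ (4 * r) * (1 + s) ^ (-(4 * r) - 4) = (1 + s) ^ (-4 : ℝ) := by
    rw [← Real.rpow_add h1s]; congr 1; ring
  calc (1 + s) ^ (4 * r) * ((a + s ^ 2) ^ (-r) - (b + s ^ 2) ^ (-r)) ^ 2
      ≤ (1 + s) ^ (4 * r) * (r ^ 2 * (a - b) ^ 2 * ((m + s ^ 2) ^ (-r - 1)) ^ 2) :=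
        mul_le_mul_of_nonneg_left hdiff2 hW
    _ ≤ (1 + s) ^ (4 * r) *
        (r ^ 2 * (a - b) ^ 2 * ((1 + s) ^ (2 * (-r - 1)) * K ^ (r + 1)) ^ 2) := by
        apply mul_le_mul_of_nonneg_left _ hW
        apply mul_le_mul_of_nonneg_left _ (by positivity)
        apply pow_le_pow_left₀ (Real.rpow_pos_of_pos hms _).le
        rw [← hcomp]; exact hmono
    _ = r ^ 2 * (a - b) ^ 2 * K ^ (2 * r + 2) * (1 + s) ^ (-4 : ℝ) := by
        rw [mul_pow, hA, hB, ← hC]; ring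

/-- With equal leading constants `c₀ = c₁`, the weighted squared difference of two
generalized Cauchy-type spectral densities `c_a (α_a^{-2} + ‖λ‖²)^{-r}`, `r = ν + d/2`,
is integrable over ℝ^d for d ∈ {1,2,3}. -/
theorem stmt11 (d : ℕ) (hd : d ∈ ({1, 2, 3} : Set ℕ)) (c₀ c₁ α₀ α₁ ν : ℝ)
    (hc₀ : 0 < c₀) (hc₁ : 0 < c₁) (hα₀ : 0 < α₀) (hα₁ : 0 < α₁) (hν : 0 < ν)
    (hcc : c₀ = c₁) :
    Integrable (fun lam : EuclideanSpace ℝ (Fin d) =>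
      (1 + ‖lam‖) ^ (4 * (ν + d / 2)) *
        (c₀ * (α₀ ^ (-2 : ℤ) + ‖lam‖ ^ 2) ^ (-(ν + d / 2)) -
         c₁ * (α₁ ^ (-2 : ℤ) + ‖lam‖ ^ 2) ^ (-(ν + d / 2))) ^ 2) := by
  subst hcc
  set r : ℝ := ν + d / 2 with hrdef
  have hr : 0 < r := by
    have : (0 : ℝ) ≤ (d : ℝ) / 2 := by positivity
    simp only [hrdef]; linarith
  set a : ℝ := α₀ ^ (-2 : ℤ) with hadef
  set b : ℝ := α₁ ^ (-2 : ℤ) with hbdef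
  have ha : 0 < a := by rw [hadef]; positivity
  have hb : 0 < b := by rw [hbdef]; positivity
  set C : ℝ := c₀ ^ 2 * (r ^ 2 * (a - b) ^ 2 * (2 * max 1 (min a b)⁻¹) ^ (2 * r + 2)) with hCdef
  have hcont : Continuous (fun lam : EuclideanSpace ℝ (Fin d) =>
      (1 + ‖lam‖) ^ (4 * r) *
        (c₀ * (a + ‖lam‖ ^ 2) ^ (-r) - c₀ * (b + ‖lam‖ ^ 2) ^ (-r)) ^ 2) := by
    have hn : Continuous fun lam : EuclideanSpace ℝ (Fin d) => ‖lam‖ := continuous_norm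
    refine Continuous.mul ?_ (Continuous.pow (Continuous.sub ?_ ?_) 2)
    · exact Continuous.rpow_const (continuous_const.add hn)
        (fun x => Or.inl (by positivity))
    · exact continuous_const.mul (Continuous.rpow_const
        (continuous_const.add (hn.pow 2)) (fun x => Or.inl (by positivity)))
    · exact continuous_const.mul (Continuous.rpow_const
        (continuous_const.add (hn.pow 2)) (fun x => Or.inl (by positivity)))
  have hfin : ((Module.finrank ℝ (EuclideanSpace ℝ (Fin d)) : ℝ)) < 4 := by
    rw [finrank_euclideanSpace_fin]
    rcases hd with h | h | h <;> subst h <;> norm_num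
  refine ((integrable_one_add_norm (E := EuclideanSpace ℝ (Fin d)) hfin).const_mul
    C).mono' hcont.aestronglyMeasurable (ae_of_all _ fun lam => ?_)
  have hs : (0 : ℝ) ≤ ‖lam‖ := norm_nonneg _
  have h1s : (0 : ℝ) < 1 + ‖lam‖ := by linarith
  have hnonneg : 0 ≤ (1 + ‖lam‖) ^ (4 * r) *
      (c₀ * (a + ‖lam‖ ^ 2) ^ (-r) - c₀ * (b + ‖lam‖ ^ 2) ^ (-r)) ^ 2 := by
    have := (Real.rpow_pos_of_pos h1s (4 * r)).le
    positivity
  rw [Real.norm_eq_abs, abs_of_nonneg hnonneg]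
  have hfactor : (c₀ * (a + ‖lam‖ ^ 2) ^ (-r) - c₀ * (b + ‖lam‖ ^ 2) ^ (-r)) ^ 2 =
      c₀ ^ 2 * ((a + ‖lam‖ ^ 2) ^ (-r) - (b + ‖lam‖ ^ 2) ^ (-r)) ^ 2 := by ring
  rw [hfactor]
  have hpb := pointwise_bound r a b hr ha hb ‖lam‖ hs
  calc (1 + ‖lam‖) ^ (4 * r) *
        (c₀ ^ 2 * ((a + ‖lam‖ ^ 2) ^ (-r) - (b + ‖lam‖ ^ 2) ^ (-r)) ^ 2)
      = c₀ ^ 2 * ((1 + ‖lam‖) ^ (4 * r) *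
          ((a + ‖lam‖ ^ 2) ^ (-r) - (b + ‖lam‖ ^ 2) ^ (-r)) ^ 2) := by ring
    _ ≤ c₀ ^ 2 * (r ^ 2 * (a - b) ^ 2 * (2 * max 1 (min a b)⁻¹) ^ (2 * r + 2) *
          (1 + ‖lam‖) ^ (-4 : ℝ)) := by
        exact mul_le_mul_of_nonneg_left hpb (by positivity)
    _ = C * (1 + ‖lam‖) ^ (-(4 : ℝ)) := by rw [hCdef]; ring_nf
end

section
/- Let H be a complex separable Hilbert space, (g̃_k)_{k∈ℕ} an orthonormal basis of H, and W a dense subspace. For any n ∈ ℕ and ε > 0, there exist g₁,…,g_n ∈ W which form an orthonormal system in H and satisfy ‖g_k − g̃_k‖ ≤ c_n ε for k = 1,…,n, where c_n is a constant depending only on n. -/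
/-!
Normalized Gram–Schmidt is continuous at every linearly independent family and fixes
orthonormal families. Perturbing `b 0, …, b (n-1)` into the dense subspace `W` and
orthonormalizing therefore gives an orthonormal family in `W` (Gram–Schmidt stays in the span)
that is as close to `b` as we like; in particular `c_n = 1` works.
-/

open Filter Topology InnerProductSpace

section GramSchmidt

variable {𝕜 E ι : Type*} [RCLike 𝕜] [NormedAddCommGroup E] [InnerProductSpace 𝕜 E]
  [LinearOrder ι] [LocallyFiniteOrderBot ι] [WellFoundedLT ι]

theorem continuousAt_gramSchmidt {v : ι → E} (hv : LinearIndependent 𝕜 v) (i : ι) :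
    ContinuousAt (fun w : ι → E => gramSchmidt 𝕜 w i) v := by
  induction i using WellFoundedLT.induction with
  | _ i ih =>
  have hdef : (fun w : ι → E => gramSchmidt 𝕜 w i) = fun w => w i - ∑ j ∈ Finset.Iio i,
      (inner 𝕜 (gramSchmidt 𝕜 w j) (w i) / (‖gramSchmidt 𝕜 w j‖ : 𝕜) ^ 2) • gramSchmidt 𝕜 w j :=
    funext fun w => eq_sub_of_add_eq (gramSchmidt_def'' 𝕜 w i).symm
  rw [hdef]
  refine (continuous_apply i).continuousAt.sub (tendsto_finsetSum _ fun j hj => ?_)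
  have hj := ih j (Finset.mem_Iio.mp hj)
  have hj_ne : (‖gramSchmidt 𝕜 v j‖ : 𝕜) ^ 2 ≠ 0 := by
    simpa using gramSchmidt_ne_zero j hv
  exact ((hj.inner (continuous_apply i).continuousAt).div
    ((RCLike.continuous_ofReal.continuousAt.comp hj.norm).pow 2) hj_ne).smul hj

theorem continuousAt_gramSchmidtNormed {v : ι → E} (hv : LinearIndependent 𝕜 v) (i : ι) :
    ContinuousAt (fun w : ι → E => gramSchmidtNormed 𝕜 w i) v := by
  have hi := continuousAt_gramSchmidt hv i
  have hi_ne : (‖gramSchmidt 𝕜 v i‖ : 𝕜) ≠ 0 := by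
    simpa using gramSchmidt_ne_zero i hv
  exact ((RCLike.continuous_ofReal.continuousAt.comp hi.norm).inv₀ hi_ne).smul hi

theorem gramSchmidtNormed_of_orthonormal {v : ι → E} (hv : Orthonormal 𝕜 v) :
    gramSchmidtNormed 𝕜 v = v := by
  funext i
  simp [gramSchmidtNormed, gramSchmidt_of_orthogonal 𝕜 hv.2, hv.1 i]

theorem gramSchmidtNormed_mem {v : ι → E} {W : Submodule 𝕜 E} (hv : ∀ i, v i ∈ W) (i : ι) :
    gramSchmidtNormed 𝕜 v i ∈ W :=
  W.smul_mem _ <| Submodule.span_le.mpr (by rintro _ ⟨j, -, rfl⟩; exact hv j)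
    (gramSchmidt_mem_span 𝕜 v le_rfl)

theorem orthonormal_gramSchmidtNormed_of_ne_zero {v : ι → E}
    (hv : ∀ i, gramSchmidtNormed 𝕜 v i ≠ 0) : Orthonormal 𝕜 (gramSchmidtNormed 𝕜 v) :=
  (gramSchmidtNormed_orthonormal' v).comp (fun i => ⟨i, hv i⟩)
    fun _ _ h => congrArg Subtype.val h

theorem Orthonormal.exists_orthonormal_mem_norm_sub_lt [Finite ι] {e : ι → E}
    (he : Orthonormal 𝕜 e) {W : Submodule 𝕜 E} (hW : Dense (W : Set E)) {ε : ℝ} (hε : 0 < ε) :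
    ∃ g : ι → E, (∀ i, g i ∈ W) ∧ Orthonormal 𝕜 g ∧ ∀ i, ‖g i - e i‖ < ε := by
  have hnear : ∀ᶠ w in 𝓝 e, ∀ i, ‖gramSchmidtNormed 𝕜 w i - e i‖ < ε ∧
      gramSchmidtNormed 𝕜 w i ≠ 0 := by
    refine eventually_all.2 fun i => ?_
    have hc := continuousAt_gramSchmidtNormed he.linearIndependent i
    rw [ContinuousAt, gramSchmidtNormed_of_orthonormal he] at hc
    filter_upwards [Metric.tendsto_nhds.mp hc ε hε, hc.eventually_ne (he.ne_zero i)]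
      with w hw hw_ne
    exact ⟨by rwa [← dist_eq_norm], hw_ne⟩
  obtain ⟨w, hwW, hw⟩ := (dense_pi Set.univ fun i _ => hW).inter_nhds_nonempty hnear
  exact ⟨gramSchmidtNormed 𝕜 w, gramSchmidtNormed_mem fun i => hwW i trivial,
    orthonormal_gramSchmidtNormed_of_ne_zero fun i => (hw i).2, fun i => (hw i).1⟩

end GramSchmidt

theorem stmt14_general {H : Type*} [NormedAddCommGroup H] [InnerProductSpace ℂ H]
    (b : HilbertBasis ℕ ℂ H) (W : Submodule ℂ H)
    (hW : Dense (W : Set H)) (n : ℕ) :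
    ∃ c : ℝ, ∀ ε : ℝ, 0 < ε → ∃ g : Fin n → H,
      (∀ k, g k ∈ W) ∧ Orthonormal ℂ g ∧ ∀ k : Fin n, ‖g k - b (k : ℕ)‖ ≤ c * ε := by
  refine ⟨1, fun ε hε => ?_⟩
  obtain ⟨g, hgW, hg, hclose⟩ :=
    (b.orthonormal.comp _ Fin.val_injective).exists_orthonormal_mem_norm_sub_lt hW hε
  exact ⟨g, hgW, hg, fun k => by simpa using (hclose k).le⟩

/-- In a complex separable Hilbert space with Hilbert basis `(g̃_k)` and dense subspace `W`,
for each `n` there is a constant `c_n` such that for every `ε > 0` one can find an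
orthonormal system `g₁,…,g_n` in `W` with `‖g_k − g̃_k‖ ≤ c_n ε`. -/
theorem stmt14 {H : Type*} [NormedAddCommGroup H] [InnerProductSpace ℂ H]
    [CompleteSpace H] (b : HilbertBasis ℕ ℂ H) (W : Submodule ℂ H)
    (hW : Dense (W : Set H)) (n : ℕ) :
    ∃ c : ℝ, ∀ ε : ℝ, 0 < ε → ∃ g : Fin n → H,
      (∀ k, g k ∈ W) ∧ Orthonormal ℂ g ∧ ∀ k : Fin n, ‖g k - b (k : ℕ)‖ ≤ c * ε :=
  stmt14_general b W hW n
end
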